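/- For every ω > 0 and x ∈ ℝ one has the generalized-kernel identities (H_ω(∂_ωΦ_ω))(x) = -σ₃Φ_ω(x) and (H_ω(x ↦ x·σ₃Φ_ω(x)))(x) = -2·Φ_ω'(x), where ∂_ωΦ_ω denotes the derivative of ω ↦ Φ_ω(x) in ω; consequently each of the four functions σ₃Φ_ω, Φ_ω', ∂_ωΦ_ω and x·σ₃Φ_ω(x) is annihilated pointwise by H_ω∘H_ω. -/

import Mathlib

noncomputable section

open Real MeasureTheory Matrix

/-- `sech y = 1 / cosh y`. -/
def sech (y : ℝ) : ℝ := 1 / Real.cosh y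

/-- The ground state profile `φ_ω(x) = (ω(p+1)/2)^{1/(p-1)} (sech(((p-1)/2)√ω x))^{2/(p-1)}`. -/
def phi (p ω x : ℝ) : ℝ :=
  (ω * (p + 1) / 2) ^ (1 / (p - 1)) * sech ((p - 1) / 2 * Real.sqrt ω * x) ^ (2 / (p - 1))

/-- The Pauli matrix `σ₁`. -/
def σ1 : Matrix (Fin 2) (Fin 2) ℂ := !![0, 1; 1, 0]

/-- The Pauli matrix `σ₂`. -/
def σ2 : Matrix (Fin 2) (Fin 2) ℂ := !![0, Complex.I; -Complex.I, 0]

/-- The Pauli matrix `σ₃`. -/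
def σ3 : Matrix (Fin 2) (Fin 2) ℂ := !![1, 0; 0, -1]

/-- The linearized operator
`(H_ω ξ)(x) = σ₃(-ξ'' + ωξ) - (1/2)φ_ω^{p-1}((p+1)σ₃ - (p-1)(iσ₂))ξ`. -/
def Hop (p ω : ℝ) (ξ : ℝ → Fin 2 → ℂ) (x : ℝ) : Fin 2 → ℂ :=
  σ3.mulVec (-(deriv (deriv ξ) x) + (ω : ℂ) • ξ x)
    - (((1 / 2) * phi p ω x ^ (p - 1) : ℝ) : ℂ) •
      (((p + 1 : ℂ) • σ3 - (p - 1 : ℂ) • (Complex.I • σ2)).mulVec (ξ x))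

/-- The vector ground state `Φ_ω(x) = (φ_ω(x), φ_ω(x))`. -/
def PhiVec (p ω : ℝ) (x : ℝ) : Fin 2 → ℂ := ![(phi p ω x : ℂ), (phi p ω x : ℂ)]

/-!
On vectors `u • (1, 1)` and `u • (1, -1)` with `u` real, `H_ω` acts through the scalar
operators `L₊ = -∂² + ω - pφ^{p-1}` and `L₋ = -∂² + ω - φ^{p-1}`, landing on multiples of
`(1, -1)` and `(1, 1)` respectively. The ground state equation `φ'' = ωφ - φ^p` says `L₋φ = 0`,
and differentiating it gives `L₊φ' = 0`. The scaling `φ_ω(x) = ω^{1/(p-1)} φ_1(√ω x)` gives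
`∂_ωφ = φ / ((p-1)ω) + xφ' / (2ω)`, so the commutator `[L, x] = -2∂` yields `L₊∂_ωφ = -φ` and
`L₋(xφ) = -2φ'`. Applying `H_ω` once more then lands in the kernel.
-/

theorem sech_pos (y : ℝ) : 0 < sech y := one_div_pos.2 (Real.cosh_pos y)

theorem contDiff_sech {n : WithTop ℕ∞} : ContDiff ℝ n sech :=
  contDiff_const.div Real.contDiff_cosh fun y => (Real.cosh_pos y).ne'

theorem tanh_sq_add_sech_sq (y : ℝ) : Real.tanh y ^ 2 + sech y ^ 2 = 1 := by
  rw [Real.tanh_eq_sinh_div_cosh, sech]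
  field_simp
  linear_combination -Real.cosh_sq_sub_sinh_sq y

theorem hasDerivAt_sech (y : ℝ) : HasDerivAt sech (-(Real.tanh y * sech y)) y := by
  refine ((hasDerivAt_const y (1 : ℝ)).div (Real.hasDerivAt_cosh y)
    (Real.cosh_pos y).ne').congr_deriv ?_
  rw [Real.tanh_eq_sinh_div_cosh, sech]
  field_simp
  ring

theorem hasDerivAt_tanh (y : ℝ) : HasDerivAt Real.tanh (sech y ^ 2) y := by
  rw [show Real.tanh = fun z => Real.sinh z / Real.cosh z from funext Real.tanh_eq_sinh_div_cosh]
  refine ((Real.hasDerivAt_sinh y).div (Real.hasDerivAt_cosh y)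
    (Real.cosh_pos y).ne').congr_deriv ?_
  rw [sech]
  field_simp
  linear_combination Real.cosh_sq_sub_sinh_sq y

theorem hasDerivAt_tanh_mul (k x : ℝ) :
    HasDerivAt (fun x => Real.tanh (k * x)) (k * sech (k * x) ^ 2) x :=
  ((hasDerivAt_tanh (k * x)).comp x ((hasDerivAt_id' x).const_mul k)).congr_deriv (by ring)

theorem hasDerivAt_sech_mul_rpow (k α x : ℝ) :
    HasDerivAt (fun x => sech (k * x) ^ α)
      (-(α * k) * Real.tanh (k * x) * sech (k * x) ^ α) x := by
  have hs := (sech_pos (k * x)).ne'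
  refine (((hasDerivAt_sech (k * x)).comp x ((hasDerivAt_id' x).const_mul k)).rpow_const
    (p := α) (Or.inl hs)).congr_deriv ?_
  simp only [Function.comp_apply, Real.rpow_sub_one hs]
  field_simp

section GroundState

variable {p ω : ℝ}

theorem phi_pos (hp : -1 < p) (hω : 0 < ω) (x : ℝ) : 0 < phi p ω x :=
  mul_pos (Real.rpow_pos_of_pos (by nlinarith) _) (Real.rpow_pos_of_pos (sech_pos _) _)

theorem contDiff_phi (p ω : ℝ) {n : WithTop ℕ∞} : ContDiff ℝ n (phi p ω) :=
  contDiff_const.mul ((contDiff_sech.comp (contDiff_const.mul contDiff_id)).rpow_const_of_ne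
    fun _ => (sech_pos _).ne')

theorem hasDerivAt_phi (hp : p ≠ 1) (x : ℝ) :
    HasDerivAt (phi p ω)
      (-(√ω * Real.tanh ((p - 1) / 2 * √ω * x) * phi p ω x)) x := by
  have hp1 : p - 1 ≠ 0 := sub_ne_zero.2 hp
  refine ((hasDerivAt_sech_mul_rpow ((p - 1) / 2 * √ω) (2 / (p - 1)) x).const_mul
    ((ω * (p + 1) / 2) ^ (1 / (p - 1)))).congr_deriv ?_
  unfold phi
  field_simp

theorem deriv_phi (hp : p ≠ 1) :
    deriv (phi p ω) = fun x => -(√ω * Real.tanh ((p - 1) / 2 * √ω * x) * phi p ω x) :=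
  funext fun x => (hasDerivAt_phi hp x).deriv

theorem phi_rpow_sub_one (hp : 1 < p) (hω : 0 ≤ ω) (x : ℝ) :
    phi p ω x ^ (p - 1) = ω * (p + 1) / 2 * sech ((p - 1) / 2 * √ω * x) ^ 2 := by
  have hp1 : p - 1 ≠ 0 := by linarith
  have hA : 0 ≤ ω * (p + 1) / 2 := by nlinarith
  have hs := (sech_pos ((p - 1) / 2 * √ω * x)).le
  rw [phi, Real.mul_rpow (Real.rpow_nonneg hA _) (Real.rpow_nonneg hs _),
    ← Real.rpow_mul hA, ← Real.rpow_mul hs, one_div_mul_cancel hp1, Real.rpow_one,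
    div_mul_cancel₀ _ hp1, Real.rpow_two]

theorem deriv_deriv_phi (hp : 1 < p) (hω : 0 ≤ ω) (x : ℝ) :
    deriv (deriv (phi p ω)) x = ω * phi p ω x - phi p ω x ^ (p - 1) * phi p ω x := by
  have hk := hasDerivAt_tanh_mul ((p - 1) / 2 * √ω) x
  rw [deriv_phi hp.ne', ((hk.const_mul √ω).fun_mul (hasDerivAt_phi hp.ne' x)).fun_neg.deriv,
    phi_rpow_sub_one hp hω]
  linear_combination (-(p - 1) / 2 * sech ((p - 1) / 2 * √ω * x) ^ 2 +
      Real.tanh ((p - 1) / 2 * √ω * x) ^ 2) * phi p ω x * Real.mul_self_sqrt hω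
    + ω * phi p ω x * tanh_sq_add_sech_sq ((p - 1) / 2 * √ω * x)

theorem phi_rpow_sub_one_mul (hp : -1 < p) (hω : 0 < ω) (x : ℝ) :
    phi p ω x ^ (p - 1) * phi p ω x = phi p ω x ^ p := by
  rw [Real.rpow_sub_one (phi_pos hp hω x).ne', div_mul_cancel₀ _ (phi_pos hp hω x).ne']

theorem deriv_deriv_deriv_phi (hp : 1 < p) (hω : 0 < ω) (x : ℝ) :
    deriv (deriv (deriv (phi p ω))) x = (ω - p * phi p ω x ^ (p - 1)) * deriv (phi p ω) x := by
  have hp' : -1 < p := by linarith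
  have hφ := (contDiff_phi p ω (n := 1)).differentiable one_ne_zero x
  have hφφ : deriv (deriv (phi p ω)) = fun y => ω * phi p ω y - phi p ω y ^ p := by
    funext y
    rw [deriv_deriv_phi hp hω.le, phi_rpow_sub_one_mul hp' hω]
  rw [hφφ, ((hφ.hasDerivAt.const_mul ω).fun_sub
    (hφ.hasDerivAt.rpow_const (Or.inl (phi_pos hp' hω x).ne'))).deriv]
  ring

theorem phi_eq_rpow_mul_phi_one (hp : -1 ≤ p) (hω : 0 ≤ ω) (x : ℝ) :
    phi p ω x = ω ^ (1 / (p - 1)) * phi p 1 (√ω * x) := by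
  rw [phi, phi, Real.sqrt_one, mul_one, mul_div_assoc, Real.mul_rpow hω (by linarith), mul_assoc,
    mul_assoc, one_mul]

theorem hasDerivAt_phi_omega (hp : 1 < p) (hω : 0 < ω) (x : ℝ) :
    HasDerivAt (fun w => phi p w x)
      (phi p ω x / ((p - 1) * ω) + x * deriv (phi p ω) x / (2 * ω)) ω := by
  have hp1 : p - 1 ≠ 0 := by linarith
  have hφ₁ : ∀ y, HasDerivAt (phi p 1) (deriv (phi p 1) y) y := fun y =>
    ((contDiff_phi p 1 (n := 1)).differentiable one_ne_zero y).hasDerivAt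
  have hscale : ∀ {w}, 0 ≤ w → ∀ y, phi p w y = w ^ (1 / (p - 1)) * phi p 1 (√w * y) :=
    phi_eq_rpow_mul_phi_one (by linarith)
  have hderiv_x : deriv (phi p ω) x = ω ^ (1 / (p - 1)) * deriv (phi p 1) (√ω * x) * √ω := by
    rw [show phi p ω = fun y => ω ^ (1 / (p - 1)) * phi p 1 (√ω * y) from
      funext (hscale hω.le)]
    refine (((hφ₁ _).comp x ((hasDerivAt_id' x).const_mul √ω)).const_mul _).deriv.trans ?_
    ring
  have h := (Real.hasDerivAt_rpow_const (p := 1 / (p - 1)) (Or.inl hω.ne')).fun_mul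
    ((hφ₁ (√ω * x)).comp ω ((Real.hasDerivAt_sqrt hω.ne').mul_const x))
  refine (h.congr_of_eventuallyEq ?_).congr_deriv ?_
  · filter_upwards [Ioi_mem_nhds hω] with w hw using hscale hw.le x
  · rw [Function.comp_apply, hderiv_x, hscale hω.le, Real.rpow_sub_one hω.ne']
    field_simp
    linear_combination -(p - 1) * x * deriv (phi p 1) (√ω * x) * Real.mul_self_sqrt hω.le

end GroundState

def schrodingerOp (V : ℝ → ℝ) (ω : ℝ) (u : ℝ → ℝ) (x : ℝ) : ℝ :=
  -deriv (deriv u) x + ω * u x - V x * u x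

namespace schrodingerOp

variable {V : ℝ → ℝ} {ω : ℝ}

theorem zero : schrodingerOp V ω 0 = 0 := by
  funext x; simp [schrodingerOp]

theorem const_mul (c : ℝ) (u : ℝ → ℝ) (x : ℝ) :
    schrodingerOp V ω (fun y => c * u y) x = c * schrodingerOp V ω u x := by
  simp only [schrodingerOp, deriv_const_mul_field']
  ring

theorem neg (u : ℝ → ℝ) (x : ℝ) :
    schrodingerOp V ω (fun y => -u y) x = -schrodingerOp V ω u x := by
  simp only [schrodingerOp, deriv.fun_neg']
  ring

theorem add {u v : ℝ → ℝ} (hu : ContDiff ℝ 2 u) (hv : ContDiff ℝ 2 v) (x : ℝ) :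
    schrodingerOp V ω (fun y => u y + v y) x = schrodingerOp V ω u x + schrodingerOp V ω v x := by
  have hu1 : ContDiff ℝ 1 (deriv u) := hu.deriv'
  have hv1 : ContDiff ℝ 1 (deriv v) := hv.deriv'
  have hd : deriv (fun y => u y + v y) = fun y => deriv u y + deriv v y := by
    funext y
    exact deriv_add (hu.differentiable two_ne_zero y) (hv.differentiable two_ne_zero y)
  simp only [schrodingerOp, hd]
  rw [deriv_fun_add (hu1.differentiable one_ne_zero x) (hv1.differentiable one_ne_zero x)]
  ring

theorem id_mul {u : ℝ → ℝ} (hu : ContDiff ℝ 2 u) (x : ℝ) :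
    schrodingerOp V ω (fun y => y * u y) x = x * schrodingerOp V ω u x - 2 * deriv u x := by
  have hu1 : ContDiff ℝ 1 (deriv u) := hu.deriv'
  have hd : deriv (fun y => y * u y) = fun y => u y + y * deriv u y := by
    funext y
    simpa using ((hasDerivAt_id' y).fun_mul (hu.differentiable two_ne_zero y).hasDerivAt).deriv
  have hd2 : deriv (fun y => u y + y * deriv u y) x = 2 * deriv u x + x * deriv (deriv u) x := by
    rw [((hu.differentiable two_ne_zero x).hasDerivAt.fun_add
      ((hasDerivAt_id' x).fun_mul (hu1.differentiable one_ne_zero x).hasDerivAt)).deriv]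
    ring
  simp only [schrodingerOp, hd, hd2]
  ring

end schrodingerOp

def Lplus (p ω : ℝ) : (ℝ → ℝ) → ℝ → ℝ := schrodingerOp (fun y => p * phi p ω y ^ (p - 1)) ω

def Lminus (p ω : ℝ) : (ℝ → ℝ) → ℝ → ℝ := schrodingerOp (fun y => phi p ω y ^ (p - 1)) ω

section LinearizedOperators

variable {p ω : ℝ}

theorem Lminus_phi (hp : 1 < p) (hω : 0 ≤ ω) : Lminus p ω (phi p ω) = 0 := by
  funext x
  rw [Lminus, schrodingerOp, deriv_deriv_phi hp hω, Pi.zero_apply]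
  ring

theorem Lplus_deriv_phi (hp : 1 < p) (hω : 0 < ω) : Lplus p ω (deriv (phi p ω)) = 0 := by
  funext x
  rw [Lplus, schrodingerOp, deriv_deriv_deriv_phi hp hω, Pi.zero_apply]
  ring

theorem Lminus_id_mul_phi (hp : 1 < p) (hω : 0 ≤ ω) :
    Lminus p ω (fun y => y * phi p ω y) = fun x => -2 * deriv (phi p ω) x := by
  funext x
  rw [Lminus, schrodingerOp.id_mul (contDiff_phi p ω), ← Lminus, Lminus_phi hp hω, Pi.zero_apply]
  ring

theorem Lplus_deriv_omega_phi (hp : 1 < p) (hω : 0 < ω) :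
    Lplus p ω (fun y => deriv (fun w => phi p w y) ω) = fun x => -phi p ω x := by
  have hp1 : p - 1 ≠ 0 := by linarith
  have hφ : ContDiff ℝ 2 (phi p ω) := contDiff_phi p ω
  have hφ' : ContDiff ℝ 2 (deriv (phi p ω)) := (contDiff_phi p ω (n := 3)).deriv'
  have hdω : (fun y => deriv (fun w => phi p w y) ω) = fun y =>
      1 / ((p - 1) * ω) * phi p ω y + 1 / (2 * ω) * (y * deriv (phi p ω) y) :=
    funext fun y => (hasDerivAt_phi_omega hp hω y).deriv.trans (by ring)
  funext x
  rw [hdω, Lplus, schrodingerOp.add (by fun_prop) (by fun_prop), schrodingerOp.const_mul,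
    schrodingerOp.const_mul, schrodingerOp.id_mul hφ', ← Lplus, Lplus_deriv_phi hp hω,
    Pi.zero_apply, Lplus, schrodingerOp, deriv_deriv_phi hp hω.le]
  field_simp
  ring

end LinearizedOperators

theorem deriv_ofReal_smul {E : Type*} [NormedAddCommGroup E] [NormedSpace ℂ E]
    [NormedSpace ℝ E] [IsScalarTower ℝ ℂ E] (u : ℝ → ℝ) (e : E) :
    deriv (fun y => (u y : ℂ) • e) = fun y => ((deriv u y : ℝ) : ℂ) • e := by
  funext y
  by_cases hu : DifferentiableAt ℝ u y
  · exact (hu.hasDerivAt.ofReal_comp.smul_const e).deriv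
  rcases eq_or_ne e 0 with rfl | he
  · simp
  -- `u` is recovered from `u • e` by a continuous functional, so both sides vanish.
  rw [deriv_zero_of_not_differentiableAt hu, Complex.ofReal_zero, zero_smul]
  refine deriv_zero_of_not_differentiableAt fun hξ => hu ?_
  obtain ⟨g, -, hg⟩ := exists_dual_vector ℂ e (norm_ne_zero_iff.2 he)
  have hrecover : u = fun y => Complex.re (g ((u y : ℂ) • e)) / ‖e‖ := by
    funext y
    simp [hg, he]
  rw [hrecover]
  exact (Complex.reCLM.differentiableAt.comp y
    ((g.restrictScalars ℝ).differentiableAt.comp y hξ)).div_const _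

theorem Hop_ofReal_smul_one_one (p ω : ℝ) (u : ℝ → ℝ) (x : ℝ) :
    Hop p ω (fun y => (u y : ℂ) • ![1, 1]) x = (Lplus p ω u x : ℂ) • ![1, -1] := by
  simp only [Hop, deriv_ofReal_smul]
  ext i
  fin_cases i <;> simp [σ3, σ2, Lplus, schrodingerOp] <;> ring

theorem Hop_ofReal_smul_one_neg_one (p ω : ℝ) (u : ℝ → ℝ) (x : ℝ) :
    Hop p ω (fun y => (u y : ℂ) • ![1, -1]) x = (Lminus p ω u x : ℂ) • ![1, 1] := by
  simp only [Hop, deriv_ofReal_smul]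
  ext i
  fin_cases i <;> simp [σ3, σ2, Lminus, schrodingerOp] <;> ring

theorem PhiVec_eq_smul (p ω : ℝ) : PhiVec p ω = fun y => (phi p ω y : ℂ) • ![1, 1] := by
  funext y
  ext i
  fin_cases i <;> simp [PhiVec]

theorem σ3_mulVec_smul_one_one (c : ℂ) : σ3 *ᵥ (c • ![1, 1]) = c • ![1, -1] := by
  ext i
  fin_cases i <;> simp [σ3]

/-- Generalized kernel identities: `H_ω ∂_ωΦ_ω = -σ₃Φ_ω`, `H_ω (xσ₃Φ_ω) = -2Φ_ω'`, and
`H_ω ∘ H_ω` annihilates `σ₃Φ_ω`, `Φ_ω'`, `∂_ωΦ_ω` and `xσ₃Φ_ω`. -/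
theorem generalized_kernel (p : ℝ) (hp : 5 < p) (ω : ℝ) (hω : 0 < ω) (x : ℝ) :
    Hop p ω (fun y => deriv (fun w => PhiVec p w y) ω) x = -(σ3.mulVec (PhiVec p ω x)) ∧
    Hop p ω (fun y => (y : ℂ) • σ3.mulVec (PhiVec p ω y)) x
      = -((2 : ℂ) • deriv (PhiVec p ω) x) ∧
    Hop p ω (fun y => Hop p ω (fun z => σ3.mulVec (PhiVec p ω z)) y) x = 0 ∧
    Hop p ω (fun y => Hop p ω (deriv (PhiVec p ω)) y) x = 0 ∧
    Hop p ω (fun y => Hop p ω (fun z => deriv (fun w => PhiVec p w z) ω) y) x = 0 ∧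
    Hop p ω (fun y => Hop p ω (fun z => (z : ℂ) • σ3.mulVec (PhiVec p ω z)) y) x = 0 := by
  have hp1 : 1 < p := by linarith
  simp only [PhiVec_eq_smul, σ3_mulVec_smul_one_one, deriv_ofReal_smul, smul_smul,
    ← Complex.ofReal_mul, Hop_ofReal_smul_one_one, Hop_ofReal_smul_one_neg_one]
  refine ⟨?_, ?_, ?_, ?_, ?_, ?_⟩
  · rw [Lplus_deriv_omega_phi hp1 hω]
    simp
  · rw [Lminus_id_mul_phi hp1 hω.le]
    simp
  · rw [Lminus_phi hp1 hω.le, Lplus, schrodingerOp.zero]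
    simp
  · rw [Lplus_deriv_phi hp1 hω, Lminus, schrodingerOp.zero]
    simp
  · rw [Lplus_deriv_omega_phi hp1 hω, Lminus, schrodingerOp.neg, ← Lminus, Lminus_phi hp1 hω.le]
    simp
  · rw [Lminus_id_mul_phi hp1 hω.le, Lplus, schrodingerOp.const_mul, ← Lplus,
      Lplus_deriv_phi hp1 hω]
    simp
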